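/- arXiv:1706.03513 — 3 statements merged into one kernel-verified Lean document; each statement's English description precedes it below -/
import Mathlib

section
/- For a real-valued function h on subsets of a finite set V with h(∅) = 0, h satisfies all elemental inequalities (H_h(A | V\{A}) ≥ 0 for all A ∈ V, and I_h(A;B|C) ≥ 0 for all distinct A,B and C ⊆ V\{A,B}) if and only if h is a polymatroid, i.e., h is monotone (h(S) ≤ h(T) whenever S ⊆ T) and submodular (h(S) + h(T) ≥ h(S∪T) + h(S∩T)). -/
/-!
Write `Δ_a(S) = h(insert a S) - h(S)` for the marginal gain of `a` over `S`. The inequality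
`I_h(a;b|S) ≥ 0` says exactly `Δ_a(insert b S) ≤ Δ_a(S)`, so adding elements one at a time
shows that `Δ_a` is antitone on sets avoiding `a`. Together with `H_h(a | V \ {a}) ≥ 0` this gives
`Δ_a(S) ≥ Δ_a(V \ {a}) ≥ 0`, i.e. monotonicity, after which `Δ_a` is antitone on all sets.
Summing marginal gains over the elements of `S` then yields submodularity. Conversely, every
elemental inequality is an instance of monotonicity or submodularity.
-/

open Finset
open scoped Classical

variable {V : Type*}

/-- A polymatroid: normalized, monotone, submodular set function. -/
def IsPolymatroid [Fintype V] [DecidableEq V] (h : Finset V → ℝ) : Prop :=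
  h ∅ = 0 ∧ (∀ S T : Finset V, S ⊆ T → h S ≤ h T) ∧
    ∀ S T : Finset V, h (S ∪ T) + h (S ∩ T) ≤ h S + h T

/-- `h` satisfies the functional dependencies `Φ`: `H_h(X | Y) = 0` for each `(X, Y) ∈ Φ`. -/
def SatisfiesFD [Fintype V] [DecidableEq V] (h : Finset V → ℝ)
    (Φ : Finset (Finset V × Finset V)) : Prop :=
  ∀ p ∈ Φ, h (p.1 ∪ p.2) = h p.2

/-- Closure of `C` under the functional dependencies `Φ`. -/
noncomputable def closureFD [Fintype V] [DecidableEq V] (Φ : Finset (Finset V × Finset V))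
    (C : Finset V) : Finset V :=
  Finset.univ.filter (fun a => ∀ h : Finset V → ℝ, IsPolymatroid h → SatisfiesFD h Φ →
    h (insert a C) = h C)

/-- Conditional mutual information `I_h(A;B|C)` of singletons. -/
def Ih [DecidableEq V] (h : Finset V → ℝ) (A B : V) (C : Finset V) : ℝ :=
  h (insert A C) + h (insert B C) - h (insert A (insert B C)) - h C

/-- `A ∼_C B`: `A` and `B` imply each other conditioned on `C`. -/
def SimC [Fintype V] [DecidableEq V] (Φ : Finset (Finset V × Finset V)) (C : Finset V)
    (A B : V) : Prop :=
  B ∈ closureFD Φ (insert A C) ∧ A ∈ closureFD Φ (insert B C)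

/-- `A` is `C`-minimal. -/
def CMinimal [Fintype V] [DecidableEq V] (Φ : Finset (Finset V × Finset V)) (C : Finset V)
    (A : V) : Prop :=
  A ∉ C ∧ ∀ B : V, B ∉ C → B ∈ closureFD Φ (insert A C) → A ∈ closureFD Φ (insert B C)

section ElementalInequalities

variable [DecidableEq V] {h : Finset V → ℝ}

theorem marginal_insert_le_of_Ih_nonneg
    (hI : ∀ (a b : V) (C : Finset V), a ≠ b → a ∉ C → b ∉ C → Ih h a b C ≥ 0)
    {a b : V} {S : Finset V} (ha : a ∉ S) (hab : a ≠ b) :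
    h (insert a (insert b S)) - h (insert b S) ≤ h (insert a S) - h S := by
  by_cases hb : b ∈ S
  · rw [insert_eq_of_mem hb]
  · have := hI a b S hab ha hb
    unfold Ih at this
    linarith

theorem marginal_anti_of_Ih_nonneg
    (hI : ∀ (a b : V) (C : Finset V), a ≠ b → a ∉ C → b ∉ C → Ih h a b C ≥ 0)
    {a : V} {S T : Finset V} (hST : S ⊆ T) (ha : a ∉ T) :
    h (insert a T) - h T ≤ h (insert a S) - h S := by
  rw [← union_sdiff_of_subset hST] at ha ⊢
  generalize T \ S = D at ha ⊢
  induction D using Finset.induction_on with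
  | empty => simp
  | insert b D _ ih =>
    rw [union_insert] at ha ⊢
    have haD : a ∉ S ∪ D := fun haD => ha (mem_insert_of_mem haD)
    have hab : a ≠ b := by rintro rfl; exact ha (mem_insert_self a _)
    linarith [marginal_insert_le_of_Ih_nonneg hI haD hab, ih haD]

theorem le_of_subset_of_le_insert (hins : ∀ (a : V) (S : Finset V), h S ≤ h (insert a S))
    {S T : Finset V} (hST : S ⊆ T) : h S ≤ h T := by
  rw [← union_sdiff_of_subset hST]
  generalize T \ S = D
  induction D using Finset.induction_on with
  | empty => simp
  | insert b D _ ih => exact ih.trans (union_insert b S D ▸ hins b (S ∪ D))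

theorem marginal_anti_of_monotone_of_Ih_nonneg
    (hmono : ∀ S T : Finset V, S ⊆ T → h S ≤ h T)
    (hI : ∀ (a b : V) (C : Finset V), a ≠ b → a ∉ C → b ∉ C → Ih h a b C ≥ 0)
    (a : V) {S T : Finset V} (hST : S ⊆ T) :
    h (insert a T) - h T ≤ h (insert a S) - h S := by
  by_cases ha : a ∈ T
  · rw [insert_eq_of_mem ha, sub_self, sub_nonneg]
    exact hmono _ _ (subset_insert a S)
  · exact marginal_anti_of_Ih_nonneg hI hST ha

theorem submodular_of_marginal_anti
    (hanti : ∀ (a : V) (S T : Finset V), S ⊆ T → h (insert a T) - h T ≤ h (insert a S) - h S)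
    (S T : Finset V) : h (S ∪ T) + h (S ∩ T) ≤ h S + h T := by
  have key : ∀ A : Finset V, h (A ∪ T) - h T ≤ h (A ∪ (S ∩ T)) - h (S ∩ T) := by
    intro A
    induction A using Finset.induction_on with
    | empty => simp
    | insert a A _ ih =>
      rw [insert_union, insert_union]
      linarith [hanti a (A ∪ (S ∩ T)) (A ∪ T) (union_subset_union_right inter_subset_right)]
  have := key S
  rw [union_eq_left.mpr inter_subset_left] at this
  linarith

theorem Ih_nonneg_of_submodular
    (hsub : ∀ S T : Finset V, h S + h T ≥ h (S ∪ T) + h (S ∩ T))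
    {a b : V} (C : Finset V) (hab : a ≠ b) : Ih h a b C ≥ 0 := by
  have hunion : insert a C ∪ insert b C = insert a (insert b C) := by grind
  have hinter : insert a C ∩ insert b C = C := by grind
  have := hsub (insert a C) (insert b C)
  rw [hunion, hinter] at this
  unfold Ih
  linarith

variable [Fintype V]

theorem le_insert_of_elemental
    (hH : ∀ a : V, h (insert a (univ \ {a})) - h (univ \ {a}) ≥ 0)
    (hI : ∀ (a b : V) (C : Finset V), a ≠ b → a ∉ C → b ∉ C → Ih h a b C ≥ 0)
    (a : V) (S : Finset V) : h S ≤ h (insert a S) := by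
  by_cases ha : a ∈ S
  · rw [insert_eq_of_mem ha]
  · have hS : S ⊆ univ \ {a} := fun x hx => by grind
    have ha' : a ∉ univ \ {a} := by simp
    linarith [hH a, marginal_anti_of_Ih_nonneg hI hS ha']

end ElementalInequalities

theorem stmt2_general [Fintype V] [DecidableEq V] (h : Finset V → ℝ) :
    ((∀ A : V, h (insert A (Finset.univ \ {A})) - h (Finset.univ \ {A}) ≥ 0) ∧
     (∀ (A B : V) (C : Finset V), A ≠ B → A ∉ C → B ∉ C → Ih h A B C ≥ 0))
    ↔ ((∀ S T : Finset V, S ⊆ T → h S ≤ h T) ∧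
       (∀ S T : Finset V, h S + h T ≥ h (S ∪ T) + h (S ∩ T))) := by
  constructor
  · rintro ⟨hH, hI⟩
    have hmono : ∀ S T : Finset V, S ⊆ T → h S ≤ h T := fun _ _ =>
      le_of_subset_of_le_insert (le_insert_of_elemental hH hI)
    exact ⟨hmono, submodular_of_marginal_anti
      (fun a _ _ => marginal_anti_of_monotone_of_Ih_nonneg hmono hI a)⟩
  · rintro ⟨hmono, hsub⟩
    exact ⟨fun A => sub_nonneg.mpr (hmono _ _ (subset_insert A _)),
      fun A B C hAB _ _ => Ih_nonneg_of_submodular hsub C hAB⟩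

/-- A set function with `h(∅) = 0` satisfies all elemental inequalities iff it is a
polymatroid (monotone and submodular). -/
theorem stmt2 [Fintype V] [DecidableEq V] (h : Finset V → ℝ) (h0 : h ∅ = 0) :
    ((∀ A : V, h (insert A (Finset.univ \ {A})) - h (Finset.univ \ {A}) ≥ 0) ∧
     (∀ (A B : V) (C : Finset V), A ≠ B → A ∉ C → B ∉ C → Ih h A B C ≥ 0))
    ↔ ((∀ S T : Finset V, S ⊆ T → h S ≤ h T) ∧
       (∀ S T : Finset V, h S + h T ≥ h (S ∪ T) + h (S ∩ T))) :=
  stmt2_general h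
end

section
/- Let Φ be functional dependencies on V, C ⊆ V close, and A, B ∈ V\C distinct. If A is not C-minimal (i.e., there exists D ∈ V\C with D ∈ cl({A}∪C) but A ∉ cl({D}∪C)), then the inequality I(A;B|C) ≥ 0 is redundant: for every polymatroid h satisfying Φ, I_h(A;B|C) = I_h(D;B|C) + I_h(A;B|C∪{D}), so I(A;B|C) ≥ 0 is implied by I(D;B|C) ≥ 0 and I(A;B|C∪{D}) ≥ 0. -/
open Finset
open scoped Classical

variable {V : Type*}

theorem mem_closureFD_iff [Fintype V] [DecidableEq V] {Φ : Finset (Finset V × Finset V)}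
    {C : Finset V} {a : V} :
    a ∈ closureFD Φ C ↔ ∀ h : Finset V → ℝ, IsPolymatroid h → SatisfiesFD h Φ →
      h (insert a C) = h C := by
  simp [closureFD]

theorem IsPolymatroid.insert_eq_of_subset [Fintype V] [DecidableEq V] {h : Finset V → ℝ}
    (hh : IsPolymatroid h) {D : V} {X Y : Finset V} (hXY : X ⊆ Y)
    (hX : h (insert D X) = h X) : h (insert D Y) = h Y := by
  obtain ⟨-, hmono, hsub⟩ := hh
  have hunion : insert D X ∪ Y = insert D Y := by
    rw [Finset.insert_union, Finset.union_eq_right.mpr hXY]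
  have hinter : X ⊆ insert D X ∩ Y := Finset.subset_inter (Finset.subset_insert _ _) hXY
  have := hsub (insert D X) Y
  rw [hunion, hX] at this
  linarith [hmono _ _ hinter, hmono Y (insert D Y) (Finset.subset_insert _ _)]

/-- The chain rule: both sides equal `I(A,D;B|C)` once `D` is determined by `A` given `C`. -/
theorem Ih_eq_add_Ih_insert [DecidableEq V] (h : Finset V → ℝ) (A B D : V) (C : Finset V)
    (hAC : h (insert D (insert A C)) = h (insert A C))
    (hABC : h (insert D (insert A (insert B C))) = h (insert A (insert B C))) :
    Ih h A B C = Ih h D B C + Ih h A B (insert D C) := by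
  simp only [Ih, Finset.insert_comm A D, Finset.insert_comm B D, hAC, hABC]
  ring

theorem stmt9_general [Fintype V] [DecidableEq V] (Φ : Finset (Finset V × Finset V))
    (C : Finset V) (A B D : V)
    (hD1 : D ∈ closureFD Φ (insert A C)) :
    ∀ h : Finset V → ℝ, IsPolymatroid h → SatisfiesFD h Φ →
      Ih h A B C = Ih h D B C + Ih h A B (insert D C) := by
  intro h hh hΦ
  have hAC : h (insert D (insert A C)) = h (insert A C) := mem_closureFD_iff.mp hD1 h hh hΦ
  have hABC : h (insert D (insert A (insert B C))) = h (insert A (insert B C)) :=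
    hh.insert_eq_of_subset (Finset.insert_subset_insert _ (Finset.subset_insert _ _)) hAC
  exact Ih_eq_add_Ih_insert h A B D C hAC hABC

/-- Reduction 1: if `A` is not `C`-minimal, witnessed by `D`, then
`I_h(A;B|C) = I_h(D;B|C) + I_h(A;B|C∪{D})` for every polymatroid `h` satisfying `Φ`,
so `I(A;B|C) ≥ 0` is redundant. -/
theorem stmt9 [Fintype V] [DecidableEq V] (Φ : Finset (Finset V × Finset V))
    (C : Finset V) (hC : closureFD Φ C = C) (A B D : V)
    (hA : A ∉ C) (hB : B ∉ C) (hAB : A ≠ B) (hD : D ∉ C)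
    (hD1 : D ∈ closureFD Φ (insert A C)) (hD2 : A ∉ closureFD Φ (insert D C)) :
    ∀ h : Finset V → ℝ, IsPolymatroid h → SatisfiesFD h Φ →
      Ih h A B C = Ih h D B C + Ih h A B (insert D C) :=
  stmt9_general Φ C A B D hD1
end

section
/- Let Φ be a set of functional dependencies and let the atomic decomposition of h be T_h (h(β) = Σ_{α∩β≠∅} T_h(α)). Call a nonempty α ⊆ V 'close' if for every (X,Y) ∈ Φ, Y ∩ α ≠ ∅ implies X ∩ α ≠ ∅. Then: if h is a polymatroid satisfying Φ and α is not close, T_h(α) = 0. -/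
open Finset
open scoped Classical

variable {V : Type*}

/-- Vanishing atoms: if `h` is a polymatroid satisfying `Φ` with atomic decomposition
`T`, and the atom `[C]` is not close w.r.t. `Φ` (some `(X,Y) ∈ Φ` has `Y ⊆ C` but
`X ⊄ C`), then `T([C]) = 0`, where the atom `[C]` corresponds to `α = V \ C`. -/
theorem stmt19 [Fintype V] [DecidableEq V] (Φ : Finset (Finset V × Finset V))
    (h T : Finset V → ℝ) (hp : IsPolymatroid h) (hs : SatisfiesFD h Φ)
    (hdec : ∀ β : Finset V,
      h β = ∑ α ∈ Finset.univ.filter (fun α : Finset V => (α ∩ β).Nonempty), T α)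
    (C : Finset V) (hC : C ≠ Finset.univ)
    (hnc : ∃ p ∈ Φ, p.2 ⊆ C ∧ ¬ p.1 ⊆ C) :
    T (Finset.univ \ C) = 0 := by
  obtain ⟨p, hpΦ, hYC, hXC⟩ := hnc
  obtain ⟨x, hxX, hxC⟩ : ∃ x, x ∈ p.1 ∧ x ∉ C := by
    by_contra hcon
    push_neg at hcon
    exact hXC hcon
  obtain ⟨h0, hmono, hsubm⟩ := hp
  -- h (insert x p.2) = h p.2
  have hxY : h (insert x p.2) = h p.2 := by
    have h1 : h p.2 ≤ h (insert x p.2) := hmono _ _ (subset_insert _ _)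
    have h2 : h (insert x p.2) ≤ h (p.1 ∪ p.2) :=
      hmono _ _ (insert_subset (mem_union_left _ hxX) subset_union_right)
    have := hs p hpΦ
    linarith
  -- h (insert x C) = h C
  have hxCeq : h (insert x C) = h C := by
    have hsm := hsubm C (insert x p.2)
    have e1 : C ∪ insert x p.2 = insert x C := by
      ext a
      simp only [mem_union, mem_insert]
      constructor
      · rintro (ha | ha | ha)
        · exact Or.inr ha
        · exact Or.inl ha
        · exact Or.inr (hYC ha)
      · rintro (rfl | ha)
        · exact Or.inr (Or.inl rfl)
        · exact Or.inl ha
    have e2 : C ∩ insert x p.2 = p.2 := by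
      ext a
      simp only [mem_inter, mem_insert]
      constructor
      · rintro ⟨haC, rfl | ha⟩
        · exact absurd haC hxC
        · exact ha
      · intro ha
        exact ⟨hYC ha, Or.inr ha⟩
    rw [e1, e2, hxY] at hsm
    have := hmono C (insert x C) (subset_insert _ _)
    linarith
  -- step lemma: for all S ⊇ C with x ∉ S, h (insert x S) = h S
  have hstep : ∀ S : Finset V, C ⊆ S → x ∉ S → h (insert x S) = h S := by
    intro S hCS hxS
    have hsm := hsubm S (insert x C)
    have e1 : S ∪ insert x C = insert x S := by
      ext a
      simp only [mem_union, mem_insert]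
      constructor
      · rintro (ha | ha | ha)
        · exact Or.inr ha
        · exact Or.inl ha
        · exact Or.inr (hCS ha)
      · rintro (rfl | ha)
        · exact Or.inr (Or.inl rfl)
        · exact Or.inl ha
    have e2 : S ∩ insert x C = C := by
      ext a
      simp only [mem_inter, mem_insert]
      constructor
      · rintro ⟨haS, rfl | ha⟩
        · exact absurd haS hxS
        · exact ha
      · intro ha
        exact ⟨hCS ha, Or.inr ha⟩
    rw [e1, e2, hxCeq] at hsm
    have := hmono S (insert x S) (subset_insert _ _)
    linarith
  -- key sum identity
  have key : ∀ S : Finset V, C ⊆ S → x ∉ S →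
      ∑ α ∈ univ.filter (fun α : Finset V => x ∈ α ∧ α ∩ S = ∅), T α = 0 := by
    intro S hCS hxS
    have h1 := hdec (insert x S)
    have h2 := hdec S
    have hsub : univ.filter (fun α : Finset V => (α ∩ S).Nonempty) ⊆
        univ.filter (fun α : Finset V => (α ∩ insert x S).Nonempty) := by
      intro α hα
      simp only [mem_filter, mem_univ, true_and] at *
      exact hα.mono (inter_subset_inter (subset_refl _) (subset_insert _ _))
    have hdiff : univ.filter (fun α : Finset V => (α ∩ insert x S).Nonempty) \
        univ.filter (fun α : Finset V => (α ∩ S).Nonempty) =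
        univ.filter (fun α : Finset V => x ∈ α ∧ α ∩ S = ∅) := by
      ext α
      simp only [mem_sdiff, mem_filter, mem_univ, true_and,
        not_nonempty_iff_eq_empty]
      constructor
      · rintro ⟨ha, hb⟩
        refine ⟨?_, hb⟩
        obtain ⟨a, ha'⟩ := ha
        rw [mem_inter, mem_insert] at ha'
        rcases ha'.2 with rfl | haS
        · exact ha'.1
        · exact absurd (mem_inter.mpr ⟨ha'.1, haS⟩) (by simp [hb])
      · rintro ⟨hxα, hempty⟩
        exact ⟨⟨x, mem_inter.mpr ⟨hxα, mem_insert_self _ _⟩⟩, hempty⟩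
    rw [← hdiff, Finset.sum_sdiff_eq_sub hsub, ← h1, ← h2, hstep S hCS hxS,
      sub_self]
  -- main induction
  have main : ∀ n : ℕ, ∀ B : Finset V, B.card ≤ n → x ∈ B → B ∩ C = ∅ → T B = 0 := by
    intro n
    induction n with
    | zero =>
      intro B hB hxB _
      have : B = ∅ := Finset.card_eq_zero.mp (Nat.le_zero.mp hB)
      subst this
      exact absurd hxB (notMem_empty x)
    | succ n ih =>
      intro B hB hxB hBC
      have hCsub : C ⊆ univ \ B := by
        intro a ha
        simp only [mem_sdiff, mem_univ, true_and]
        intro haB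
        exact absurd (mem_inter.mpr ⟨haB, ha⟩) (by simp [hBC])
      have hxnot : x ∉ univ \ B := by simp [hxB]
      have hkey := key (univ \ B) hCsub hxnot
      have hfil : univ.filter (fun α : Finset V => x ∈ α ∧ α ∩ (univ \ B) = ∅) =
          univ.filter (fun α : Finset V => x ∈ α ∧ α ⊆ B) := by
        ext α
        simp only [mem_filter, mem_univ, true_and, Finset.eq_empty_iff_forall_notMem,
          mem_inter, mem_sdiff, Finset.subset_iff]
        constructor
        · rintro ⟨hxα, hcond⟩
          refine ⟨hxα, fun a haα => ?_⟩
          by_contra haB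
          exact hcond a ⟨haα, haB⟩
        · rintro ⟨hxα, hsub⟩
          exact ⟨hxα, fun a ha => ha.2 (hsub ha.1)⟩
      rw [hfil] at hkey
      have hsingle : ∑ α ∈ univ.filter (fun α : Finset V => x ∈ α ∧ α ⊆ B), T α = T B := by
        rw [Finset.sum_eq_single B]
        · intro α hα hne
          simp only [mem_filter, mem_univ, true_and] at hα
          have hlt : α.card < B.card :=
            Finset.card_lt_card (Finset.ssubset_iff_subset_ne.mpr ⟨hα.2, hne⟩)
          refine ih α (by omega) hα.1 ?_
          apply Finset.eq_empty_iff_forall_notMem.mpr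
          intro a ha
          rw [mem_inter] at ha
          exact absurd (mem_inter.mpr ⟨hα.2 ha.1, ha.2⟩) (by simp [hBC])
        · intro hB'
          exact absurd (by simp [hxB] : B ∈ univ.filter
            (fun α : Finset V => x ∈ α ∧ α ⊆ B)) hB'
      rw [hsingle] at hkey
      exact hkey
  exact main (univ \ C).card (univ \ C) le_rfl (by simp [hxC])
    (Finset.sdiff_inter_self _ _)
end
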